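/- arXiv:1109.6894 — 6 statements merged into one kernel-verified Lean document; each statement's English description precedes it below -/
import Mathlib

section
/- Let M, ν, ζ be complex numbers with M not an integer. Let V be the free ℂ-module with basis (v_j)_{j ∈ ℤ} and define ℂ-linear endomorphisms of V by: H(v_j) = (2j+M)·v_j, Z₋(v_j) = v_{j−1}, T(v_j) = (ν/(2j+M+2))·v_j, and Z₊(v_j) = γ_j·v_{j+1}, where γ_j = −((2j+M+2)/(2j+M+3))·((2j+M)(2j+M+4)/4 + ν²/(4(2j+M+2)²) + ζ). Then these operators satisfy the denominator-cleared defining relations of the diagonal reduction algebra DR(sl(2)): (a) H∘Z₊ − Z₊∘H = 2·Z₊, H∘T = T∘H, H∘Z₋ − Z₋∘H = −2·Z₋; (b) Z₊∘T∘(H+2) = T∘Z₊∘(H+4); (c) T∘Z₋∘H = Z₋∘T∘(H+2); (d) Z₊∘Z₋∘H∘(H+1)∘(H+2) = Z₋∘Z₊∘H∘H∘(H+3) − T∘T∘(H+1)∘(H+2) + H∘H∘(H+1)∘(H+2). Here H+c denotes the operator H + c·id. This construction provides a two-parameter family of representations of DR(sl(2)). -/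
set_option maxHeartbeats 2000000


/-- **A two-parameter family of representations of the diagonal reduction algebra
`DR(sl(2))`.**  Let `M, ν, ζ ∈ ℂ` with `M` not an integer, let `V` be the free `ℂ`-module
with basis `(v_j)_{j ∈ ℤ}` and define linear endomorphisms of `V` by
`H v_j = (2j+M) v_j`, `Z₋ v_j = v_{j-1}`, `T v_j = (ν/(2j+M+2)) v_j` and
`Z₊ v_j = γ_j v_{j+1}` with
`γ_j = -((2j+M+2)/(2j+M+3)) ((2j+M)(2j+M+4)/4 + ν²/(4(2j+M+2)²) + ζ)`.
Then these operators satisfy the denominator-cleared defining relations of `DR(sl(2))`: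
(a) the weight relations, (b) `Z₊∘T∘(H+2) = T∘Z₊∘(H+4)`, (c) `T∘Z₋∘H = Z₋∘T∘(H+2)` and
(d) `Z₊∘Z₋∘H∘(H+1)∘(H+2) = Z₋∘Z₊∘H∘H∘(H+3) - T∘T∘(H+1)∘(H+2) + H∘H∘(H+1)∘(H+2)`. -/
theorem DR_sl2_representation_on_VM
    (M ν ζ : ℂ) (hM : ∀ k : ℤ, M ≠ (k : ℂ))
    (γ : ℤ → ℂ)
    (hγ : ∀ j : ℤ, γ j = -((2 * (j : ℂ) + M + 2) / (2 * (j : ℂ) + M + 3)) *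
      ((2 * (j : ℂ) + M) * (2 * (j : ℂ) + M + 4) / 4 +
        ν ^ 2 / (4 * (2 * (j : ℂ) + M + 2) ^ 2) + ζ))
    (H Zm T Zp : Module.End ℂ (ℤ →₀ ℂ))
    (hH : ∀ j : ℤ, H (Finsupp.single j 1) = (2 * (j : ℂ) + M) • Finsupp.single j 1)
    (hZm : ∀ j : ℤ, Zm (Finsupp.single j 1) = Finsupp.single (j - 1) 1)
    (hT : ∀ j : ℤ, T (Finsupp.single j 1) =
      (ν / (2 * (j : ℂ) + M + 2)) • Finsupp.single j 1)
    (hZp : ∀ j : ℤ, Zp (Finsupp.single j 1) = γ j • Finsupp.single (j + 1) 1) :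
    (H * Zp - Zp * H = (2 : ℂ) • Zp ∧ H * T = T * H ∧
      H * Zm - Zm * H = (-2 : ℂ) • Zm) ∧
    Zp * T * (H + 2) = T * Zp * (H + 4) ∧
    T * Zm * H = Zm * T * (H + 2) ∧
    Zp * Zm * H * (H + 1) * (H + 2)
      = Zm * Zp * H * H * (H + 3) - T * T * (H + 1) * (H + 2)
        + H * H * (H + 1) * (H + 2) := by
  have hne : ∀ (j c : ℤ), (2 * (j : ℂ) + M + (c : ℂ)) ≠ 0 := by
    intro j c h
    apply hM (-(2 * j + c))
    push_cast
    linear_combination h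
  have castn : ∀ (n : ℕ) (x : ℤ →₀ ℂ),
      ((n : ℕ) : Module.End ℂ (ℤ →₀ ℂ)) x = (n : ℂ) • x := by
    intro n x
    rw [Module.End.natCast_apply, Nat.cast_smul_eq_nsmul]
  have c2 : ∀ x : ℤ →₀ ℂ, (2 : Module.End ℂ (ℤ →₀ ℂ)) x = (2 : ℂ) • x := by
    intro x
    rw [show (2 : Module.End ℂ (ℤ →₀ ℂ)) = ((2 : ℕ) : Module.End ℂ (ℤ →₀ ℂ)) by norm_cast,
      castn]; norm_num
  have c3 : ∀ x : ℤ →₀ ℂ, (3 : Module.End ℂ (ℤ →₀ ℂ)) x = (3 : ℂ) • x := by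
    intro x
    rw [show (3 : Module.End ℂ (ℤ →₀ ℂ)) = ((3 : ℕ) : Module.End ℂ (ℤ →₀ ℂ)) by norm_cast,
      castn]; norm_num
  have c4 : ∀ x : ℤ →₀ ℂ, (4 : Module.End ℂ (ℤ →₀ ℂ)) x = (4 : ℂ) • x := by
    intro x
    rw [show (4 : Module.End ℂ (ℤ →₀ ℂ)) = ((4 : ℕ) : Module.End ℂ (ℤ →₀ ℂ)) by norm_cast,
      castn]; norm_num
  refine ⟨⟨?_, ?_, ?_⟩, ?_, ?_, ?_⟩
  all_goals
    apply Finsupp.lhom_ext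
    intro j b
    rw [show Finsupp.single j b = b • Finsupp.single j 1 by
      rw [Finsupp.smul_single, smul_eq_mul, mul_one]]
    simp only [LinearMap.sub_apply, LinearMap.add_apply, Module.End.mul_apply,
      LinearMap.smul_apply, Module.End.one_apply, map_smul, map_add, map_sub, hH, hZm, hT, hZp,
      c2, c3, c4, smul_smul, smul_sub, smul_add]
  -- (a1)
  · match_scalars
    ring
  -- (a2)
  · match_scalars
    ring
  -- (a3)
  · match_scalars
    ring
  -- (b)
  · have h2 := hne j 2
    have h4 := hne j 4
    push_cast at h2 h4
    match_scalars
    rw [show (2 * ((j : ℂ) + 1) + M + 2) = 2 * (j : ℂ) + M + 4 from by ring]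
    field_simp
  -- (c)
  · have h0 : 2 * (j : ℂ) + M ≠ 0 := by simpa using hne j 0
    have h2 := hne j 2
    push_cast at h2
    match_scalars
    rw [show (2 * ((j : ℂ) - 1) + M + 2) = 2 * (j : ℂ) + M from by ring]
    field_simp
  -- (d)
  · have h0 : 2 * (j : ℂ) + M ≠ 0 := by simpa using hne j 0
    have h1 := hne j 1
    have h2 := hne j 2
    have h3 := hne j 3
    push_cast at h1 h2 h3
    have hγj1 : γ (j - 1) = -((2 * (j : ℂ) + M) / (2 * (j : ℂ) + M + 1)) *
        ((2 * (j : ℂ) + M - 2) * (2 * (j : ℂ) + M + 2) / 4 +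
          ν ^ 2 / (4 * (2 * (j : ℂ) + M) ^ 2) + ζ) := by
      have h := hγ (j - 1)
      push_cast at h
      rw [h,
        show (2 * ((j : ℂ) - 1) + M + 4) = 2 * (j : ℂ) + M + 2 from by ring,
        show (2 * ((j : ℂ) - 1) + M + 3) = 2 * (j : ℂ) + M + 1 from by ring,
        show (2 * ((j : ℂ) - 1) + M + 2) = 2 * (j : ℂ) + M from by ring,
        show (2 * ((j : ℂ) - 1) + M) = 2 * (j : ℂ) + M - 2 from by ring]
    have hγj0 := hγ j
    simp only [sub_add_cancel, add_sub_cancel, sub_add_cancel_right, add_sub_cancel_right]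
    match_scalars
    set x := 2 * (j : ℂ) + M with hx
    have i3 : (x+3) * (x+3)⁻¹ = 1 := mul_inv_cancel₀ h3
    have i2 : (x+2) * (x+2)⁻¹ = 1 := mul_inv_cancel₀ h2
    have i1 : (x+1) * (x+1)⁻¹ = 1 := mul_inv_cancel₀ h1
    have im : (4*(x+2)^2) * (4*(x+2)^2)⁻¹ = 1 :=
      mul_inv_cancel₀ (by simp [h2, pow_ne_zero])
    have iq : (4*x^2) * (4*x^2)⁻¹ = 1 :=
      mul_inv_cancel₀ (by simp [h0, pow_ne_zero])
    have g1 : γ j * (4*(x+3)*(x+2)^2)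
        = -(x+2)*(x*(x+4)*(x+2)^2 + ν^2 + 4*(x+2)^2*ζ) := by
      rw [hγj0]
      linear_combination (-(x+2)*(x*(x+4)/4 + ν^2/(4*(x+2)^2) + ζ)*4*(x+2)^2) * i3
        + (-(x+2)*ν^2) * im
    have g2 : γ (j - 1) * (4*(x+1)*x^2)
        = -x*((x-2)*(x+2)*x^2 + ν^2 + 4*x^2*ζ) := by
      rw [hγj1]
      linear_combination (-x*((x-2)*(x+2)/4 + ν^2/(4*x^2) + ζ)*4*x^2) * i1
        + (-x*ν^2) * iq
    have tsq : (ν/(x+2))^2 * (x+2)^2 = ν^2 := by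
      linear_combination (ν^2*((x+2)*(x+2)⁻¹ + 1)) * i2
    have hD : (4*x*(x+1)*(x+2)^2*(x+3)) ≠ 0 := by
      simp [h0, h1, h2, h3, pow_ne_zero]
    apply mul_left_cancel₀ hD
    linear_combination (b*(x+1)*(x+2)^3*(x+3)) * g2 - (b*x^3*(x+1)*(x+3)) * g1
      + (4*b*x*(x+1)^2*(x+2)*(x+3)) * tsq
end

section
/- Let M, ν, ζ be complex numbers with M not an integer, and let H, Z₋, T, Z₊ be the ℂ-linear endomorphisms of the free ℂ-module V with basis (v_j)_{j ∈ ℤ} defined by H(v_j) = (2j+M)·v_j, Z₋(v_j) = v_{j−1}, T(v_j) = (ν/(2j+M+2))·v_j, Z₊(v_j) = γ_j·v_{j+1} with γ_j = −((2j+M+2)/(2j+M+3))·((2j+M)(2j+M+4)/4 + ν²/(4(2j+M+2)²) + ζ). Then the central elements of DR(sl(2)) act by scalars on V: (i) (H+2)∘T = ν·id_V; (ii) Z₋∘Z₊∘(H+3) + (1/4)·(T∘T + H∘(H+4))∘(H+2) = (−ζ)·(H+2). -/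
private lemma end_ext_single {f g : Module.End ℂ (ℤ →₀ ℂ)}
    (h : ∀ j : ℤ, f (Finsupp.single j 1) = g (Finsupp.single j 1)) : f = g := by
  refine Finsupp.lhom_ext (fun a b => ?_)
  have hb : (Finsupp.single a b : ℤ →₀ ℂ) = b • Finsupp.single a 1 := by
    rw [Finsupp.smul_single, smul_eq_mul, mul_one]
  rw [hb, map_smul, map_smul, h]

private lemma end_add_ofnat_apply (H : Module.End ℂ (ℤ →₀ ℂ)) (n : ℕ) [n.AtLeastTwo]
    (x : ℤ →₀ ℂ) : (H + (OfNat.ofNat n : Module.End ℂ (ℤ →₀ ℂ))) x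
      = H x + ((OfNat.ofNat n : ℂ)) • x := by
  simp [Module.End.ofNat_apply, ← Nat.cast_smul_eq_nsmul ℂ]

/-- **Action of the central elements of `DR(sl(2))` on the modules `V_M`.**
Let `M, ν, ζ ∈ ℂ` with `M` not an integer, and let `H, Z₋, T, Z₊` be the linear
endomorphisms of the free `ℂ`-module `V` with basis `(v_j)_{j ∈ ℤ}` given by
`H v_j = (2j+M) v_j`, `Z₋ v_j = v_{j-1}`, `T v_j = (ν/(2j+M+2)) v_j`,
`Z₊ v_j = γ_j v_{j+1}` with
`γ_j = -((2j+M+2)/(2j+M+3)) ((2j+M)(2j+M+4)/4 + ν²/(4(2j+M+2)²) + ζ)`.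
Then the central elements of `DR(sl(2))` act by scalars:
(i) `(H+2)∘T = ν·id`, and
(ii) `Z₋∘Z₊∘(H+3) + (1/4)(T∘T + H∘(H+4))∘(H+2) = (-ζ)·(H+2)`
(the denominator-cleared form of the statement that `C⁽²⁾` acts as the scalar `-ζ`). -/
theorem DR_sl2_central_elements_act_by_scalars_on_VM
    (M ν ζ : ℂ) (hM : ∀ k : ℤ, M ≠ (k : ℂ))
    (γ : ℤ → ℂ)
    (hγ : ∀ j : ℤ, γ j = -((2 * (j : ℂ) + M + 2) / (2 * (j : ℂ) + M + 3)) *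
      ((2 * (j : ℂ) + M) * (2 * (j : ℂ) + M + 4) / 4 +
        ν ^ 2 / (4 * (2 * (j : ℂ) + M + 2) ^ 2) + ζ))
    (H Zm T Zp : Module.End ℂ (ℤ →₀ ℂ))
    (hH : ∀ j : ℤ, H (Finsupp.single j 1) = (2 * (j : ℂ) + M) • Finsupp.single j 1)
    (hZm : ∀ j : ℤ, Zm (Finsupp.single j 1) = Finsupp.single (j - 1) 1)
    (hT : ∀ j : ℤ, T (Finsupp.single j 1) =
      (ν / (2 * (j : ℂ) + M + 2)) • Finsupp.single j 1)
    (hZp : ∀ j : ℤ, Zp (Finsupp.single j 1) = γ j • Finsupp.single (j + 1) 1) :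
    (H + 2) * T = ν • (1 : Module.End ℂ (ℤ →₀ ℂ)) ∧
    Zm * Zp * (H + 3) + (1 / 4 : ℂ) • ((T * T + H * (H + 4)) * (H + 2))
      = (-ζ) • (H + 2) := by
  have hd : ∀ j : ℤ, (2 * (j : ℂ) + M + 2) ≠ 0 := by
    intro j h
    apply hM (-(2 * j + 2))
    push_cast
    linear_combination h
  have he : ∀ j : ℤ, (2 * (j : ℂ) + M + 3) ≠ 0 := by
    intro j h
    apply hM (-(2 * j + 3))
    push_cast
    linear_combination h
  -- images of basis vectors under `H + n`
  have hH2 : ∀ j : ℤ, (H + 2) (Finsupp.single j 1)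
      = (2 * (j : ℂ) + M + 2) • Finsupp.single j 1 := by
    intro j
    rw [end_add_ofnat_apply, hH, ← add_smul]
  have hH3 : ∀ j : ℤ, (H + 3) (Finsupp.single j 1)
      = (2 * (j : ℂ) + M + 3) • Finsupp.single j 1 := by
    intro j
    rw [end_add_ofnat_apply, hH, ← add_smul]
  have hH4 : ∀ j : ℤ, (H + 4) (Finsupp.single j 1)
      = (2 * (j : ℂ) + M + 4) • Finsupp.single j 1 := by
    intro j
    rw [end_add_ofnat_apply, hH, ← add_smul]
  constructor
  · refine end_ext_single (fun j => ?_)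
    rw [Module.End.mul_apply, hT, map_smul, hH2, smul_smul,
      LinearMap.smul_apply, Module.End.one_apply]
    congr 1
    field_simp [hd j]
  · refine end_ext_single (fun j => ?_)
    have h1 : j + 1 - 1 = j := by ring
    rw [LinearMap.add_apply, Module.End.mul_apply, Module.End.mul_apply, hH3,
      map_smul, hZp, map_smul, map_smul, hZm, h1, LinearMap.smul_apply,
      Module.End.mul_apply, hH2, map_smul, LinearMap.add_apply,
      Module.End.mul_apply, hT, map_smul, hT, Module.End.mul_apply, hH4,
      map_smul, hH, LinearMap.smul_apply, hH2]
    simp only [smul_smul, smul_add, ← add_smul, neg_smul, ← neg_add]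
    congr 1
    rw [hγ]
    have hd' := hd j
    have he' := he j
    generalize (2 * (j : ℂ) + M) = x at hd' he' ⊢
    have hrw : ν ^ 2 / (4 * (x + 2) ^ 2) = ν / (x + 2) * (ν / (x + 2)) * (1 / 4) := by
      field_simp
    rw [hrw]
    linear_combination
      (-(x + 2) * (x * (x + 4) / 4 + ν / (x + 2) * (ν / (x + 2)) * (1 / 4) + ζ)) *
        mul_inv_cancel₀ he'
end

section
/- Let α, β, γ : ℤ → ℂ be sequences with α_j ≠ 0, β_j ≠ 0, γ_j ≠ 0 for all j ∈ ℤ, satisfying for all j ∈ ℤ the recurrences: (1) α_j = α_{j−1} + 2; (2) (α_j + 2)·β_j = α_j·β_{j−1}; (3) α_j(α_j+1)(α_j+2)·γ_{j−1} = α_j²(α_j+3)·γ_j − (α_j+1)(α_j+2)·β_j² + α_j²(α_j+1)(α_j+2). Then there exist complex numbers M, ν, ζ with M not an integer such that for all j ∈ ℤ: α_j = 2j + M, β_j = ν/(2j+M+2), and γ_j = −((2j+M+2)/(2j+M+3))·((2j+M)(2j+M+4)/4 + ν²/(4(2j+M+2)²) + ζ). Consequently, any module over DR(sl(2)) with basis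 (v_j)_{j ∈ ℤ} on which z₋ v_j = v_{j−1}, t v_j = β_j v_j, z₊ v_j = γ_j v_{j+1}, h v_j = α_j v_j with all coefficients non-vanishing is isomorphic to the module V_M with non-integer M. -/
lemma DR_aux_const_of_step (f : ℤ → ℂ) (h : ∀ j : ℤ, f j = f (j - 1)) :
    ∀ j : ℤ, f j = f 0 := by
  intro j
  induction j using Int.induction_on with
  | zero => rfl
  | succ k ih =>
      have hk := h (k + 1)
      rw [show ((k : ℤ) + 1) - 1 = k by ring] at hk
      exact hk.trans ih
  | pred k ih =>
      have hk := h (-k)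
      rw [show (-(k : ℤ)) - 1 = -k - 1 by ring] at hk
      rw [← hk]; exact ih



/-- **Uniqueness of the two-parameter family of `ℤ`-graded `DR(sl(2))`-modules.**
Let `α, β, γ : ℤ → ℂ` be everywhere non-vanishing sequences satisfying the
(denominator-cleared) recurrences obtained from the defining relations of `DR(sl(2))`
acting on a module with basis `(v_j)_{j ∈ ℤ}`, `z₋ v_j = v_{j-1}`, `t v_j = β_j v_j`,
`z₊ v_j = γ_j v_{j+1}`, `h v_j = α_j v_j`:
(1) `α_j = α_{j-1} + 2`;
(2) `(α_j + 2) β_j = α_j β_{j-1}`;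
(3) `α_j (α_j+1) (α_j+2) γ_{j-1} = α_j² (α_j+3) γ_j - (α_j+1)(α_j+2) β_j²
      + α_j² (α_j+1) (α_j+2)`.
Then there are `M, ν, ζ ∈ ℂ` with `M` not an integer such that for all `j`:
`α_j = 2j + M`, `β_j = ν/(2j+M+2)` and
`γ_j = -((2j+M+2)/(2j+M+3)) ((2j+M)(2j+M+4)/4 + ν²/(4(2j+M+2)²) + ζ)`;
i.e. any such module is isomorphic to `V_M` with non-integer `M`. -/
theorem DR_sl2_weight_module_classification
    (α β γ : ℤ → ℂ)
    (hα : ∀ j : ℤ, α j ≠ 0) (hβ : ∀ j : ℤ, β j ≠ 0) (hγ : ∀ j : ℤ, γ j ≠ 0)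
    (rec1 : ∀ j : ℤ, α j = α (j - 1) + 2)
    (rec2 : ∀ j : ℤ, (α j + 2) * β j = α j * β (j - 1))
    (rec3 : ∀ j : ℤ, α j * (α j + 1) * (α j + 2) * γ (j - 1)
      = (α j) ^ 2 * (α j + 3) * γ j - (α j + 1) * (α j + 2) * (β j) ^ 2
        + (α j) ^ 2 * (α j + 1) * (α j + 2)) :
    ∃ M ν ζ : ℂ, (∀ k : ℤ, M ≠ (k : ℂ)) ∧ ∀ j : ℤ,
      α j = 2 * (j : ℂ) + M ∧
      β j = ν / (2 * (j : ℂ) + M + 2) ∧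
      γ j = -((2 * (j : ℂ) + M + 2) / (2 * (j : ℂ) + M + 3)) *
        ((2 * (j : ℂ) + M) * (2 * (j : ℂ) + M + 4) / 4 +
          ν ^ 2 / (4 * (2 * (j : ℂ) + M + 2) ^ 2) + ζ) := by
  obtain ⟨M, hMdef⟩ : ∃ M : ℂ, M = α 0 := ⟨_, rfl⟩
  -- α j = 2j + M
  have hA : ∀ j : ℤ, α j = 2 * (j : ℂ) + M := by
    have h := DR_aux_const_of_step (fun j => α j - 2 * (j : ℂ)) (by
      intro j
      have := rec1 j
      show α j - 2 * (j : ℂ) = α (j - 1) - 2 * ((j - 1 : ℤ) : ℂ)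
      push_cast
      linear_combination this)
    intro j
    have hj := h j
    simp only [Int.cast_zero] at hj
    linear_combination hj - hMdef
  -- nonvanishing facts
  have h0 : ∀ j : ℤ, 2 * (j : ℂ) + M ≠ 0 := fun j => by
    have := hα j; rwa [hA j] at this
  have h2 : ∀ j : ℤ, 2 * (j : ℂ) + M + 2 ≠ 0 := fun j => by
    have := h0 (j + 1); push_cast at this
    intro h; apply this; linear_combination h
  have h1 : ∀ j : ℤ, 2 * (j : ℂ) + M + 1 ≠ 0 := by
    intro j h
    have ha : α j = -1 := by rw [hA j]; linear_combination h
    have r := rec3 j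
    rw [ha] at r
    norm_num at r
    exact hγ j r
  have h3 : ∀ j : ℤ, 2 * (j : ℂ) + M + 3 ≠ 0 := fun j => by
    have := h1 (j + 1); push_cast at this
    intro h; apply this; linear_combination h
  -- M is not an integer
  have hMint : ∀ k : ℤ, M ≠ (k : ℂ) := by
    intro k hk
    rcases Int.even_or_odd k with ⟨m, hm⟩ | ⟨m, hm⟩
    · apply h0 (-m)
      rw [hk, hm]; push_cast; ring
    · apply h1 (-m - 1)
      rw [hk, hm]; push_cast; ring
  -- ν
  obtain ⟨ν, hνdef⟩ : ∃ ν : ℂ, ν = (M + 2) * β 0 := ⟨_, rfl⟩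
  have hc : ∀ j : ℤ, (2 * (j : ℂ) + M + 2) * β j = ν := by
    have h := DR_aux_const_of_step (fun j => (α j + 2) * β j) (by
      intro j
      have r := rec2 j
      have := rec1 j
      show (α j + 2) * β j = (α (j - 1) + 2) * β (j - 1)
      rw [this] at r ⊢
      linear_combination r)
    intro j
    have hj := h j
    simp only [hA j, hA 0, Int.cast_zero] at hj
    linear_combination hj - hνdef
  have hβf : ∀ j : ℤ, β j = ν / (2 * (j : ℂ) + M + 2) := by
    intro j
    rw [eq_div_iff (h2 j)]
    linear_combination hc j
  -- the γ invariant
  set g : ℤ → ℂ := fun j =>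
    -(γ j) * (2 * (j : ℂ) + M + 3) / (2 * (j : ℂ) + M + 2)
      - (2 * (j : ℂ) + M) * (2 * (j : ℂ) + M + 4) / 4
      - ν ^ 2 / (4 * (2 * (j : ℂ) + M + 2) ^ 2) with hgdef
  have hclear : ∀ j : ℤ, 4 * (2 * (j : ℂ) + M + 2) ^ 2 * g j =
      -(4 * (2 * (j : ℂ) + M + 2) * (2 * (j : ℂ) + M + 3) * γ j
        + (2 * (j : ℂ) + M) * (2 * (j : ℂ) + M + 4) * (2 * (j : ℂ) + M + 2) ^ 2
        + ν ^ 2) := by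
    intro j
    rw [hgdef]
    have := h2 j
    field_simp
    ring
  -- cleaned rec3
  have r2 : ∀ j : ℤ,
      (2*(j:ℂ)+M) * (2*(j:ℂ)+M+1) * (2*(j:ℂ)+M+2)^2 * γ (j-1)
        = (2*(j:ℂ)+M)^2 * (2*(j:ℂ)+M+3) * (2*(j:ℂ)+M+2) * γ j
          - (2*(j:ℂ)+M+1) * ν^2
          + (2*(j:ℂ)+M)^2 * (2*(j:ℂ)+M+1) * (2*(j:ℂ)+M+2)^2 := by
    intro j
    have r := rec3 j
    rw [hA j] at r
    have hb := hc j
    linear_combination (2*(j:ℂ)+M+2) * r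
      - ((2*(j:ℂ)+M+1) * ((2*(j:ℂ)+M+2) * β j + ν)) * hb
  -- g is constant
  have hstep : ∀ j : ℤ, g j = g (j - 1) := by
    intro j
    have e1 := hclear j
    have e2 := hclear (j - 1)
    push_cast at e2
    have hne : (4 : ℂ) * (2*(j:ℂ)+M)^2 * (2*(j:ℂ)+M+2)^2 ≠ 0 := by
      exact mul_ne_zero (mul_ne_zero (by norm_num) (pow_ne_zero _ (h0 j)))
        (pow_ne_zero _ (h2 j))
    apply mul_left_cancel₀ hne
    linear_combination (2*(j:ℂ)+M)^2 * e1 - (2*(j:ℂ)+M+2)^2 * e2 + 4 * (r2 j)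
  have hgc := DR_aux_const_of_step g hstep
  have final : ∀ j : ℤ, γ j = -((2 * (j : ℂ) + M + 2) / (2 * (j : ℂ) + M + 3)) *
        ((2 * (j : ℂ) + M) * (2 * (j : ℂ) + M + 4) / 4 +
          ν ^ 2 / (4 * (2 * (j : ℂ) + M + 2) ^ 2) + g 0) := by
    intro j
    have e := hclear j
    rw [hgc j] at e
    revert e
    generalize g 0 = ζ
    intro e
    have n2 := h2 j
    have n3 := h3 j
    field_simp
    linear_combination e
  exact ⟨M, ν, g 0, hMint, fun j => ⟨hA j, hβf j, final j⟩⟩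
end

section
/- Let R be a unital associative algebra over the complex numbers containing elements z₊, z₋, t, h such that h + n·1 is invertible in R for every integer n, and such that the following relations hold: h·z₊ − z₊·h = 2z₊; h·t = t·h; h·z₋ − z₋·h = −2z₋; z₊·t·(h+2) = t·z₊·(h+4); t·z₋·h = z₋·t·(h+2); z₊·z₋·h·(h+1)·(h+2) = z₋·z₊·h·h·(h+3) − t·t·(h+1)·(h+2) + h·h·(h+1)·(h+2). Then the element C⁽¹⁾ = (h+2)·t commutes with each of z₊, z₋, t and h; that is, C⁽¹⁾ is a central element of the subalgebra generated by z₊, z₋, t, h and the inverses (h+n)⁻¹. -/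
/-- **Centrality of `C⁽¹⁾ = (h+2)t` in `DR(sl(2))`.**
Let `R` be a unital associative `ℂ`-algebra containing elements `z₊, z₋, t, h` with
`h + n` invertible for every integer `n`, satisfying the weight relations and the
denominator-cleared defining relations of the diagonal reduction algebra `DR(sl(2))`.
Then `C⁽¹⁾ = (h+2) * t` commutes with each of `z₊`, `z₋`, `t` and `h`. -/
theorem DR_sl2_first_central_element
    {R : Type*} [Ring R] [Algebra ℂ R] (zp zm t h : R)
    (hinv : ∀ n : ℤ, IsUnit (h + (n : R)))
    (w1 : h * zp - zp * h = 2 * zp)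
    (w2 : h * t = t * h)
    (w3 : h * zm - zm * h = -2 * zm)
    (r1 : zp * t * (h + 2) = t * zp * (h + 4))
    (r2 : t * zm * h = zm * t * (h + 2))
    (r3 : zp * zm * h * (h + 1) * (h + 2)
      = zm * zp * h * h * (h + 3) - t * t * (h + 1) * (h + 2)
        + h * h * (h + 1) * (h + 2)) :
    Commute ((h + 2) * t) zp ∧ Commute ((h + 2) * t) zm ∧
      Commute ((h + 2) * t) t ∧ Commute ((h + 2) * t) h := by
  have e1 : h * zp = zp * h + 2 * zp := by
    have := w1; linear_combination (norm := noncomm_ring) this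
  have e3 : h * zm = zm * h - 2 * zm := by
    have := w3; linear_combination (norm := noncomm_ring) this
  have hzp : (h + 2) * zp = zp * (h + 4) := by
    rw [add_mul, e1]; noncomm_ring
  have hzm : (h + 2) * zm = zm * h := by
    rw [add_mul, e3]; noncomm_ring
  have ht : (h + 2) * t = t * (h + 2) := by
    rw [add_mul, mul_add, w2]; noncomm_ring
  refine ⟨?_, ?_, ?_, ?_⟩
  · show ((h + 2) * t) * zp = zp * ((h + 2) * t)
    calc ((h + 2) * t) * zp = t * ((h + 2) * zp) := by rw [ht, mul_assoc]
      _ = t * zp * (h + 4) := by rw [hzp, mul_assoc]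
      _ = zp * t * (h + 2) := r1.symm
      _ = zp * ((h + 2) * t) := by rw [ht, mul_assoc]
  · show ((h + 2) * t) * zm = zm * ((h + 2) * t)
    calc ((h + 2) * t) * zm = t * ((h + 2) * zm) := by rw [ht, mul_assoc]
      _ = t * zm * h := by rw [hzm, mul_assoc]
      _ = zm * t * (h + 2) := r2
      _ = zm * ((h + 2) * t) := by rw [ht, mul_assoc]
  · show ((h + 2) * t) * t = t * ((h + 2) * t)
    rw [ht, mul_assoc, ht]
  · have c2 : Commute (h + 2) h := by
      unfold Commute SemiconjBy; noncomm_ring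
    exact c2.mul_left (w2.symm : Commute t h)
end

section
/- Let R be a unital associative algebra over the complex numbers containing elements z₊, z₋, t, h such that h + n·1 is invertible in R for every integer n, and such that the following relations hold: h·z₊ − z₊·h = 2z₊; h·t = t·h; h·z₋ − z₋·h = −2z₋; z₊·t·(h+2) = t·z₊·(h+4); t·z₋·h = z₋·t·(h+2); z₊·z₋·h·(h+1)·(h+2) = z₋·z₊·h·h·(h+3) − t·t·(h+1)·(h+2) + h·h·(h+1)·(h+2). Then the element C⁽²⁾ = z₋·z₊·(h+3)·(h+2)⁻¹ + (1/4)·t·t + (1/4)·h·(h+4) commutes with each of z₊, z₋, t and h; that is, C⁽²⁾ is a central element of the subalgebra generated by z₊, z₋, t, h and the inverses (h+n)⁻¹. -/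
set_option maxHeartbeats 4000000

/-- **Centrality of `C⁽²⁾ = z₋z₊(h+3)(h+2)⁻¹ + t²/4 + h(h+4)/4` in `DR(sl(2))`.**
Let `R` be a unital associative `ℂ`-algebra containing elements `z₊, z₋, t, h` with
`h + n` invertible for every integer `n`, satisfying the weight relations and the
denominator-cleared defining relations of the diagonal reduction algebra `DR(sl(2))`.
Then `C⁽²⁾ = z₋ * z₊ * (h+3) * (h+2)⁻¹ + (1/4) t² + (1/4) h (h+4)` commutes with each
of `z₊`, `z₋`, `t` and `h`. -/
theorem DR_sl2_second_central_element
    {R : Type*} [Ring R] [Algebra ℂ R] (zp zm t h : R)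
    (hinv : ∀ n : ℤ, IsUnit (h + (n : R)))
    (w1 : h * zp - zp * h = 2 * zp)
    (w2 : h * t = t * h)
    (w3 : h * zm - zm * h = -2 * zm)
    (r1 : zp * t * (h + 2) = t * zp * (h + 4))
    (r2 : t * zm * h = zm * t * (h + 2))
    (r3 : zp * zm * h * (h + 1) * (h + 2)
      = zm * zp * h * h * (h + 3) - t * t * (h + 1) * (h + 2)
        + h * h * (h + 1) * (h + 2)) :
    Commute (zm * zp * (h + 3) * Ring.inverse (h + 2)
        + (1 / 4 : ℂ) • (t * t) + (1 / 4 : ℂ) • (h * (h + 4))) zp ∧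
    Commute (zm * zp * (h + 3) * Ring.inverse (h + 2)
        + (1 / 4 : ℂ) • (t * t) + (1 / 4 : ℂ) • (h * (h + 4))) zm ∧
    Commute (zm * zp * (h + 3) * Ring.inverse (h + 2)
        + (1 / 4 : ℂ) • (t * t) + (1 / 4 : ℂ) • (h * (h + 4))) t ∧
    Commute (zm * zp * (h + 3) * Ring.inverse (h + 2)
        + (1 / 4 : ℂ) • (t * t) + (1 / 4 : ℂ) • (h * (h + 4))) h := by
  have u0 : IsUnit h := by have := hinv 0; push_cast at this; simpa using this
  have u2 : IsUnit (h + 2) := by have := hinv 2; push_cast at this; exact this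
  have u4 : IsUnit (h + 4) := by have := hinv 4; push_cast at this; exact this
  set i2 := Ring.inverse (h + 2) with hi2
  set i4 := Ring.inverse (h + 4) with hi4
  set i0 := Ring.inverse h with hi0
  have i2l : i2 * (h + 2) = 1 := Ring.inverse_mul_cancel _ u2
  have i2r : (h + 2) * i2 = 1 := Ring.mul_inverse_cancel _ u2
  have i4l : i4 * (h + 4) = 1 := Ring.inverse_mul_cancel _ u4
  have i4r : (h + 4) * i4 = 1 := Ring.mul_inverse_cancel _ u4
  have i0l : i0 * h = 1 := Ring.inverse_mul_cancel _ u0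
  have i0r : h * i0 = 1 := Ring.mul_inverse_cancel _ u0
  have e1 : h * zp - zp * h - 2 * zp = 0 := by rw [w1, sub_self]
  have e2 : h * t - t * h = 0 := sub_eq_zero.mpr w2
  have e3 : h * zm - zm * h + 2 * zm = 0 := by rw [w3]; noncomm_ring
  have e4 : zp * t * (h + 2) - t * zp * (h + 4) = 0 := sub_eq_zero.mpr r1
  have e5 : t * zm * h - zm * t * (h + 2) = 0 := sub_eq_zero.mpr r2
  have e6 : zp * zm * h * (h + 1) * (h + 2) - (zm * zp * h * h * (h + 3) - t * t * (h + 1) * (h + 2) + h * h * (h + 1) * (h + 2)) = 0 := sub_eq_zero.mpr r3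
  have s2p : (h + 2) * zp = zp * (h + 4) := by
    have c : (h + 2) * zp - (zp * (h + 4)) = ((h * 0) + ((h * zp - zp * h - 2 * zp) * 1)) := by noncomm_ring
    simp only [e1, mul_zero, zero_mul, add_zero, zero_add, mul_one, one_mul,
      neg_zero, sub_zero] at c
    exact sub_eq_zero.mp c
  have s2m : (h + 2) * zm = zm * h := by
    have c : (h + 2) * zm - (zm * h) = ((h * 0) + ((h * zm - zm * h + 2 * zm) * 1)) := by noncomm_ring
    simp only [e3, mul_zero, zero_mul, add_zero, zero_add, mul_one, one_mul,
      neg_zero, sub_zero] at c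
    exact sub_eq_zero.mp c
  have s2t : (h + 2) * t = t * (h + 2) := by
    have c : (h + 2) * t - (t * (h + 2)) = ((h * 0) + ((h * t - t * h) * 1)) := by noncomm_ring
    simp only [e2, mul_zero, zero_mul, add_zero, zero_add, mul_one, one_mul,
      neg_zero, sub_zero] at c
    exact sub_eq_zero.mp c
  have i2zp : i2 * zp = zp * i4 := by
    calc i2 * zp = i2 * zp * ((h + 4) * i4) := by rw [i4r, mul_one]
      _ = i2 * (zp * (h + 4)) * i4 := by noncomm_ring
      _ = i2 * ((h + 2) * zp) * i4 := by rw [← s2p]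
      _ = (i2 * (h + 2)) * (zp * i4) := by noncomm_ring
      _ = zp * i4 := by rw [i2l, one_mul]
  have i2zm : i2 * zm = zm * i0 := by
    calc i2 * zm = i2 * zm * (h * i0) := by rw [i0r, mul_one]
      _ = i2 * (zm * h) * i0 := by noncomm_ring
      _ = i2 * ((h + 2) * zm) * i0 := by rw [← s2m]
      _ = (i2 * (h + 2)) * (zm * i0) := by noncomm_ring
      _ = zm * i0 := by rw [i2l, one_mul]
  have i2t : i2 * t = t * i2 := by
    calc i2 * t = i2 * t * ((h + 2) * i2) := by rw [i2r, mul_one]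
      _ = i2 * (t * (h + 2)) * i2 := by noncomm_ring
      _ = i2 * ((h + 2) * t) * i2 := by rw [← s2t]
      _ = (i2 * (h + 2)) * (t * i2) := by noncomm_ring
      _ = t * i2 := by rw [i2l, one_mul]
  have i2h : i2 * h = h * i2 := by
    calc i2 * h = i2 * h * ((h + 2) * i2) := by rw [i2r, mul_one]
      _ = i2 * (h * (h + 2)) * i2 := by noncomm_ring
      _ = i2 * ((h + 2) * h) * i2 := by rw [show h * (h + 2) = (h + 2) * h by noncomm_ring]
      _ = (i2 * (h + 2)) * (h * i2) := by noncomm_ring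
      _ = h * i2 := by rw [i2l, one_mul]
  have i2h4 : i2 * (h + 4) = (h + 4) * i2 := by
    calc i2 * (h + 4) = i2 * (h + 4) * ((h + 2) * i2) := by rw [i2r, mul_one]
      _ = i2 * ((h + 4) * (h + 2)) * i2 := by noncomm_ring
      _ = i2 * ((h + 2) * (h + 4)) * i2 := by rw [show (h + 4) * (h + 2) = (h + 2) * (h + 4) by noncomm_ring; norm_num]
      _ = (i2 * (h + 2)) * ((h + 4) * i2) := by noncomm_ring
      _ = (h + 4) * i2 := by rw [i2l, one_mul]
  have P1 : (((4 : R) * ((((zm * zp) * (h + 3)) * zp) * ((h + 2) * (h + 2)))) + ((((t * t) * zp) * ((h + 4) * ((h + 2) * (h + 2)))) + (((h * (h + 4)) * zp) * ((h + 4) * ((h + 2) * (h + 2)))))) = (((4 : R) * ((zp * ((zm * zp) * (h + 3))) * ((h + 4) * (h + 2)))) + (((zp * (t * t)) * ((h + 4) * ((h + 2) * (h + 2)))) + ((zp * (h * (h + 4))) * ((h + 4) * ((h + 2) * (h + 2)))))) := by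
    have c : (((4 : R) * ((((zm * zp) * (h + 3)) * zp) * ((h + 2) * (h + 2)))) + ((((t * t) * zp) * ((h + 4) * ((h + 2) * (h + 2)))) + (((h * (h + 4)) * zp) * ((h + 4) * ((h + 2) * (h + 2)))))) - ((((4 : R) * ((zp * ((zm * zp) * (h + 3))) * ((h + 4) * (h + 2)))) + (((zp * (t * t)) * ((h + 4) * ((h + 2) * (h + 2)))) + ((zp * (h * (h + 4))) * ((h + 4) * ((h + 2) * (h + 2))))))) = ((4 : R) * (((zm * zp) * ((h * 0) + ((h * zp - zp * h - 2 * zp) * 1))) * ((h + 2) * (h + 2)))) + ((((4 : R) * ((h * 0) + ((h * zp - zp * h - 2 * zp) * 1))) + ((h * ((h * 0) + ((h * zp - zp * h - 2 * zp) * 1))) + ((h * zp - zp * h - 2 * zp) * (1 * (h + 2))))) * ((h + 4) * ((h + 2) * (h + 2)))) + ((4 : R) * ((zp * zm) * ((((2 : R) * ((h * 0) + ((h * zp - zp * h - 2 * zp) * 1))) + ((3 : R) * ((h * ((h * 0) + ((h * zp - zp * h - 2 * zp) * 1))) + ((h * zp - zp * h - 2 * zp) * (1 * (h + 2)))))) +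 ((h * ((h * ((h * 0) + ((h * zp - zp * h - 2 * zp) * 1))) + ((h * zp - zp * h - 2 * zp) * (1 * (h + 2))))) + ((h * zp - zp * h - 2 * zp) * ((1 * (h + 2)) * (h + 2))))))) + ((-4 : R) * ((zp * zm * h * (h + 1) * (h + 2) - (zm * zp * h * h * (h + 3) - t * t * (h + 1) * (h + 2) + h * h * (h + 1) * (h + 2))) * zp)) + ((-4 : R) * ((zm * zp) * (((3 : R) * ((h * ((h * 0) + ((h * zp - zp * h - 2 * zp) * 1))) + ((h * zp - zp * h - 2 * zp) * (1 * (h + 2))))) + ((h * ((h * ((h * 0) + ((h * zp - zp * h - 2 * zp) * 1))) + ((h * zp - zp * h - 2 * zp) * (1 * (h + 2))))) + ((h * zp - zp * h - 2 * zp) * ((1 * (h + 2)) * (h + 2))))))) + ((4 : R) * ((t * t) * (((3 : R) * ((h * 0) + ((h * zp - zp * h - 2 * zp) * 1))) + ((h * ((h * 0) + ((h * zp - zp * h - 2 * zp) * 1))) + ((h * zp - zp * h - 2 * zp) * (1 * (h + 2))))))) + ((-4 : R) * ((((2 : R) * ((h * ((h * 0) + ((h * zp - zp * h - 2 * zp)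 * 1))) + ((h * zp - zp * h - 2 * zp) * (1 * (h + 2))))) + ((3 : R) * ((h * ((h * ((h * 0) + ((h * zp - zp * h - 2 * zp) * 1))) + ((h * zp - zp * h - 2 * zp) * (1 * (h + 2))))) + ((h * zp - zp * h - 2 * zp) * ((1 * (h + 2)) * (h + 2)))))) + ((h * ((h * ((h * ((h * 0) + ((h * zp - zp * h - 2 * zp) * 1))) + ((h * zp - zp * h - 2 * zp) * (1 * (h + 2))))) + ((h * zp - zp * h - 2 * zp) * ((1 * (h + 2)) * (h + 2))))) + ((h * zp - zp * h - 2 * zp) * (((1 * (h + 2)) * (h + 2)) * (h + 2)))))) + ((zp * t) * ((((20 : R) * ((h * 0) + ((h * t - t * h) * 1))) + ((8 : R) * ((h * ((h * 0) + ((h * t - t * h) * 1))) + ((h * t - t * h) * (1 * h))))) + ((h * ((h * ((h * 0) + ((h * t - t * h) * 1))) + ((h * t - t * h) * (1 * h)))) + ((h * t - t * h) * ((1 * h) * h))))) + (-((zp * t * (h + 2) - t * zp * (h + 4)) * (((h + 4) * (h + 2)) * t))) + (-((t * zp) * ((((32 : R) * ((h * 0) + ((h * t - t * h) * 1))) + ((10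 : R) * ((h * ((h * 0) + ((h * t - t * h) * 1))) + ((h * t - t * h) * (1 * h))))) + ((h * ((h * ((h * 0) + ((h * t - t * h) * 1))) + ((h * t - t * h) * (1 * h)))) + ((h * t - t * h) * ((1 * h) * h)))))) + (-((t * (zp * t * (h + 2) - t * zp * (h + 4))) * ((h + 4) * (h + 4)))) := by noncomm_ring
    simp only [e1, e2, e4, e6, mul_zero, zero_mul, add_zero, zero_add, mul_one, one_mul,
      neg_zero, sub_zero] at c
    exact sub_eq_zero.mp c
  have P2 : (((4 : R) * ((((zm * zp) * (h + 3)) * zm) * ((h + 2) * h))) + ((((t * t) * zm) * (h * ((h + 2) * h))) + (((h * (h + 4)) * zm) * (h * ((h + 2) * h))))) = (((4 : R) * ((zm * ((zm * zp) * (h + 3))) * (h * h))) + (((zm * (t * t)) * (h * ((h + 2) * h))) + ((zm * (h * (h + 4))) * (h * ((h + 2) * h))))) := by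
    have c : (((4 : R) * ((((zm * zp) * (h + 3)) * zm) * ((h + 2) * h))) + ((((t * t) * zm) * (h * ((h + 2) * h))) + (((h * (h + 4)) * zm) * (h * ((h + 2) * h))))) - ((((4 : R) * ((zm * ((zm * zp) * (h + 3))) * (h * h))) + (((zm * (t * t)) * (h * ((h + 2) * h))) + ((zm * (h * (h + 4))) * (h * ((h + 2) * h)))))) = ((4 : R) * (((zm * zp) * ((h * 0) + ((h * zm - zm * h + 2 * zm) * 1))) * ((h + 2) * h))) + ((4 : R) * (zm * (zp * zm * h * (h + 1) * (h + 2) - (zm * zp * h * h * (h + 3) - t * t * (h + 1) * (h + 2) + h * h * (h + 1) * (h + 2))))) + ((((4 : R) * ((h * 0) + ((h * zm - zm * h + 2 * zm) * 1))) + ((h * ((h * 0) + ((h * zm - zm * h + 2 * zm) * 1))) + ((h * zm - zm * h + 2 * zm) * (1 * (h - 2))))) * (h * ((h + 2) * h))) + ((t * (t * zm * h - zm * t * (h + 2))) * ((h + 2) * h)) + (-((t * zm) * ((((4 : R) * ((h * 0) + ((h * t - t * h) * 1))) + ((4 : R) * ((h * ((h * 0) + ((h * t - t * h) * 1))) + ((h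 * t - t * h) * (1 * h))))) + ((h * ((h * ((h * 0) + ((h * t - t * h) * 1))) + ((h * t - t * h) * (1 * h)))) + ((h * t - t * h) * ((1 * h) * h)))))) + ((t * zm * h - zm * t * (h + 2)) * (((h + 2) * (h + 2)) * t)) + ((zm * t) * ((((12 : R) * ((h * 0) + ((h * t - t * h) * 1))) + ((6 : R) * ((h * ((h * 0) + ((h * t - t * h) * 1))) + ((h * t - t * h) * (1 * h))))) + ((h * ((h * ((h * 0) + ((h * t - t * h) * 1))) + ((h * t - t * h) * (1 * h)))) + ((h * t - t * h) * ((1 * h) * h))))) := by noncomm_ring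
    simp only [e2, e3, e5, e6, mul_zero, zero_mul, add_zero, zero_add, mul_one, one_mul,
      neg_zero, sub_zero] at c
    exact sub_eq_zero.mp c
  have P3 : ((((zm * zp) * (h + 3)) * t) * (h + 2)) = ((t * ((zm * zp) * (h + 3))) * (h + 2)) := by
    have c : ((((zm * zp) * (h + 3)) * t) * (h + 2)) - (((t * ((zm * zp) * (h + 3))) * (h + 2))) = (((zm * zp) * ((h * 0) + ((h * t - t * h) * 1))) * (h + 2)) + ((zm * (zp * t * (h + 2) - t * zp * (h + 4))) * (h + 3)) + ((t * zm) * (((h * 0) + ((h * zp - zp * h - 2 * zp) * 1)) + ((h * ((h * 0) + ((h * zp - zp * h - 2 * zp) * 1))) + ((h * zp - zp * h - 2 * zp) * (1 * (h + 2)))))) + (-((t * zm * h - zm * t * (h + 2)) * ((h + 1) * zp))) + (-((zm * t) * (((3 : R) * ((h * 0) + ((h * zp - zp * h - 2 * zp) * 1))) + ((h * ((h * 0) + ((h * zp - zp * h - 2 * zp) * 1))) + ((h * zp - zp * h - 2 * zp) * (1 * (h + 2))))))) := by noncomm_ring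
    simp only [e1, e2, e4, e5, mul_zero, zero_mul, add_zero, zero_add, mul_one, one_mul,
      neg_zero, sub_zero] at c
    exact sub_eq_zero.mp c
  have P4 : (((zm * zp) * (h + 3)) * h) = (h * ((zm * zp) * (h + 3))) := by
    have c : (((zm * zp) * (h + 3)) * h) - ((h * ((zm * zp) * (h + 3)))) = (-(((h * 0) + ((h * zm - zm * h + 2 * zm) * 1)) * (zp * (h + 3)))) + (-((zm * ((h * 0) + ((h * zp - zp * h - 2 * zp) * 1))) * (h + 3))) := by noncomm_ring
    simp only [e1, e3, mul_zero, zero_mul, add_zero, zero_add, mul_one, one_mul,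
      neg_zero, sub_zero] at c
    exact sub_eq_zero.mp c
  have P5 : ((h * (h + 4)) * t) = (t * (h * (h + 4))) := by
    have c : ((h * (h + 4)) * t) - ((t * (h * (h + 4)))) = (((4 : R) * ((h * 0) + ((h * t - t * h) * 1))) + ((h * ((h * 0) + ((h * t - t * h) * 1))) + ((h * t - t * h) * (1 * h)))) := by noncomm_ring
    simp only [e2, mul_zero, zero_mul, add_zero, zero_add, mul_one, one_mul,
      neg_zero, sub_zero] at c
    exact sub_eq_zero.mp c
  have P6 : ((t * t) * h) = (h * (t * t)) := by
    have c : ((t * t) * h) - ((h * (t * t))) = (-(((h * 0) + ((h * t - t * h) * 1)) * t)) + (-(t * ((h * 0) + ((h * t - t * h) * 1)))) := by noncomm_ring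
    simp only [e2, mul_zero, zero_mul, add_zero, zero_add, mul_one, one_mul,
      neg_zero, sub_zero] at c
    exact sub_eq_zero.mp c
  have b1 : zm * zp * (h + 3) * i2 * zp * ((h + 4) * ((h + 2) * (h + 2))) = zm * zp * (h + 3) * zp * ((h + 2) * (h + 2)) := by
    calc zm * zp * (h + 3) * i2 * zp * ((h + 4) * ((h + 2) * (h + 2))) = zm * zp * (h + 3) * (i2 * zp) * ((h + 4) * ((h + 2) * (h + 2))) := by noncomm_ring
      _ = zm * zp * (h + 3) * (zp * i4) * ((h + 4) * ((h + 2) * (h + 2))) := by rw [i2zp]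
      _ = zm * zp * (h + 3) * zp * ((i4 * (h + 4)) * ((h + 2) * (h + 2))) := by noncomm_ring
      _ = zm * zp * (h + 3) * zp * ((h + 2) * (h + 2)) := by rw [i4l, one_mul]
  have b2 : zp * (zm * zp * (h + 3) * i2) * ((h + 4) * ((h + 2) * (h + 2))) = zp * (zm * zp * (h + 3)) * ((h + 4) * (h + 2)) := by
    calc zp * (zm * zp * (h + 3) * i2) * ((h + 4) * ((h + 2) * (h + 2))) = zp * (zm * zp * (h + 3)) * ((i2 * (h + 4)) * ((h + 2) * (h + 2))) := by noncomm_ring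
      _ = zp * (zm * zp * (h + 3)) * (((h + 4) * i2) * ((h + 2) * (h + 2))) := by rw [i2h4]
      _ = zp * (zm * zp * (h + 3)) * ((h + 4) * ((i2 * (h + 2)) * (h + 2))) := by noncomm_ring
      _ = zp * (zm * zp * (h + 3)) * ((h + 4) * (1 * (h + 2))) := by rw [i2l]
      _ = zp * (zm * zp * (h + 3)) * ((h + 4) * (h + 2)) := by rw [one_mul]
  have comm_zp : ((4 : R) * (zm * zp * (h + 3) * i2) + t * t + h * (h + 4)) * zp = zp * ((4 : R) * (zm * zp * (h + 3) * i2) + t * t + h * (h + 4)) := by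
    have uU : IsUnit ((h + 4) * ((h + 2) * (h + 2))) := u4.mul (u2.mul u2)
    refine uU.mul_right_cancel ?_
    calc ((4 : R) * (zm * zp * (h + 3) * i2) + t * t + h * (h + 4)) * zp * ((h + 4) * ((h + 2) * (h + 2)))
        = (4 : R) * (zm * zp * (h + 3) * i2 * zp * ((h + 4) * ((h + 2) * (h + 2)))) + (t * t * zp * ((h + 4) * ((h + 2) * (h + 2))) + h * (h + 4) * zp * ((h + 4) * ((h + 2) * (h + 2)))) := by noncomm_ring
      _ = (4 : R) * (zm * zp * (h + 3) * zp * ((h + 2) * (h + 2))) + (t * t * zp * ((h + 4) * ((h + 2) * (h + 2))) + h * (h + 4) * zp * ((h + 4) * ((h + 2) * (h + 2)))) := by rw [b1]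
      _ = (((4 : R) * ((((zm * zp) * (h + 3)) * zp) * ((h + 2) * (h + 2)))) + ((((t * t) * zp) * ((h + 4) * ((h + 2) * (h + 2)))) + (((h * (h + 4)) * zp) * ((h + 4) * ((h + 2) * (h + 2)))))) := by noncomm_ring
      _ = (((4 : R) * ((zp * ((zm * zp) * (h + 3))) * ((h + 4) * (h + 2)))) + (((zp * (t * t)) * ((h + 4) * ((h + 2) * (h + 2)))) + ((zp * (h * (h + 4))) * ((h + 4) * ((h + 2) * (h + 2)))))) := P1
      _ = (4 : R) * (zp * (zm * zp * (h + 3) * i2) * ((h + 4) * ((h + 2) * (h + 2)))) + (zp * (t * t) * ((h + 4) * ((h + 2) * (h + 2))) + zp * (h * (h + 4)) * ((h + 4) * ((h + 2) * (h + 2)))) := by rw [b2]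
      _ = zp * ((4 : R) * (zm * zp * (h + 3) * i2) + t * t + h * (h + 4)) * ((h + 4) * ((h + 2) * (h + 2))) := by noncomm_ring
  have b1m : zm * zp * (h + 3) * i2 * zm * (h * ((h + 2) * h)) = zm * zp * (h + 3) * zm * ((h + 2) * h) := by
    calc zm * zp * (h + 3) * i2 * zm * (h * ((h + 2) * h)) = zm * zp * (h + 3) * (i2 * zm) * (h * ((h + 2) * h)) := by noncomm_ring
      _ = zm * zp * (h + 3) * (zm * i0) * (h * ((h + 2) * h)) := by rw [i2zm]
      _ = zm * zp * (h + 3) * zm * ((i0 * h) * ((h + 2) * h)) := by noncomm_ring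
      _ = zm * zp * (h + 3) * zm * ((h + 2) * h) := by rw [i0l, one_mul]
  have b2m : zm * (zm * zp * (h + 3) * i2) * (h * ((h + 2) * h)) = zm * (zm * zp * (h + 3)) * (h * h) := by
    calc zm * (zm * zp * (h + 3) * i2) * (h * ((h + 2) * h)) = zm * (zm * zp * (h + 3)) * ((i2 * h) * ((h + 2) * h)) := by noncomm_ring
      _ = zm * (zm * zp * (h + 3)) * ((h * i2) * ((h + 2) * h)) := by rw [i2h]
      _ = zm * (zm * zp * (h + 3)) * (h * ((i2 * (h + 2)) * h)) := by noncomm_ring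
      _ = zm * (zm * zp * (h + 3)) * (h * (1 * h)) := by rw [i2l]
      _ = zm * (zm * zp * (h + 3)) * (h * h) := by rw [one_mul]
  have comm_zm : ((4 : R) * (zm * zp * (h + 3) * i2) + t * t + h * (h + 4)) * zm = zm * ((4 : R) * (zm * zp * (h + 3) * i2) + t * t + h * (h + 4)) := by
    have uU : IsUnit (h * ((h + 2) * h)) := u0.mul (u2.mul u0)
    refine uU.mul_right_cancel ?_
    calc ((4 : R) * (zm * zp * (h + 3) * i2) + t * t + h * (h + 4)) * zm * (h * ((h + 2) * h))
        = (4 : R) * (zm * zp * (h + 3) * i2 * zm * (h * ((h + 2) * h))) + (t * t * zm * (h * ((h + 2) * h)) + h * (h + 4) * zm * (h * ((h + 2) * h))) := by noncomm_ring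
      _ = (4 : R) * (zm * zp * (h + 3) * zm * ((h + 2) * h)) + (t * t * zm * (h * ((h + 2) * h)) + h * (h + 4) * zm * (h * ((h + 2) * h))) := by rw [b1m]
      _ = (((4 : R) * ((((zm * zp) * (h + 3)) * zm) * ((h + 2) * h))) + ((((t * t) * zm) * (h * ((h + 2) * h))) + (((h * (h + 4)) * zm) * (h * ((h + 2) * h))))) := by noncomm_ring
      _ = (((4 : R) * ((zm * ((zm * zp) * (h + 3))) * (h * h))) + (((zm * (t * t)) * (h * ((h + 2) * h))) + ((zm * (h * (h + 4))) * (h * ((h + 2) * h))))) := P2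
      _ = (4 : R) * (zm * (zm * zp * (h + 3) * i2) * (h * ((h + 2) * h))) + (zm * (t * t) * (h * ((h + 2) * h)) + zm * (h * (h + 4)) * (h * ((h + 2) * h))) := by rw [b2m]
      _ = zm * ((4 : R) * (zm * zp * (h + 3) * i2) + t * t + h * (h + 4)) * (h * ((h + 2) * h)) := by noncomm_ring
  have Et : zm * zp * (h + 3) * t = t * (zm * zp * (h + 3)) := by
    refine u2.mul_right_cancel ?_
    calc zm * zp * (h + 3) * t * (h + 2) = ((((zm * zp) * (h + 3)) * t) * (h + 2)) := by noncomm_ring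
      _ = ((t * ((zm * zp) * (h + 3))) * (h + 2)) := P3
      _ = t * (zm * zp * (h + 3)) * (h + 2) := by noncomm_ring
  have comm_t : ((4 : R) * (zm * zp * (h + 3) * i2) + t * t + h * (h + 4)) * t = t * ((4 : R) * (zm * zp * (h + 3) * i2) + t * t + h * (h + 4)) := by
    calc ((4 : R) * (zm * zp * (h + 3) * i2) + t * t + h * (h + 4)) * t = (4 : R) * (zm * zp * (h + 3) * (i2 * t)) + (t * t * t + h * (h + 4) * t) := by noncomm_ring
      _ = (4 : R) * (zm * zp * (h + 3) * (t * i2)) + (t * t * t + h * (h + 4) * t) := by rw [i2t]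
      _ = (4 : R) * ((zm * zp * (h + 3) * t) * i2) + (t * t * t + h * (h + 4) * t) := by noncomm_ring
      _ = (4 : R) * ((t * (zm * zp * (h + 3))) * i2) + (t * t * t + t * (h * (h + 4))) := by rw [Et, P5]
      _ = t * ((4 : R) * (zm * zp * (h + 3) * i2) + t * t + h * (h + 4)) := by noncomm_ring
  have comm_h : ((4 : R) * (zm * zp * (h + 3) * i2) + t * t + h * (h + 4)) * h = h * ((4 : R) * (zm * zp * (h + 3) * i2) + t * t + h * (h + 4)) := by
    calc ((4 : R) * (zm * zp * (h + 3) * i2) + t * t + h * (h + 4)) * h = (4 : R) * (zm * zp * (h + 3) * (i2 * h)) + (t * t * h + h * (h + 4) * h) := by noncomm_ring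
      _ = (4 : R) * (zm * zp * (h + 3) * (h * i2)) + (t * t * h + h * (h + 4) * h) := by rw [i2h]
      _ = (4 : R) * ((zm * zp * (h + 3) * h) * i2) + (t * t * h + h * (h + 4) * h) := by noncomm_ring
      _ = (4 : R) * ((h * (zm * zp * (h + 3))) * i2) + (h * (t * t) + h * (h + 4) * h) := by rw [P4, P6]
      _ = h * ((4 : R) * (zm * zp * (h + 3) * i2) + t * t + h * (h + 4)) := by noncomm_ring
  have quarter : ∀ x : R, (1 / 4 : ℂ) • ((4 : R) * x) = x := by
    intro x
    have h4 : (4 : ℂ) • x = (4 : R) * x := by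
      rw [Algebra.smul_def, map_ofNat]
    rw [← h4, smul_smul]
    norm_num
  have hCD : zm * zp * (h + 3) * i2 + (1 / 4 : ℂ) • (t * t) + (1 / 4 : ℂ) • (h * (h + 4))
      = (1 / 4 : ℂ) • ((4 : R) * (zm * zp * (h + 3) * i2) + t * t + h * (h + 4)) := by
    rw [smul_add, smul_add, quarter]
  have mk : ∀ g : R, ((4 : R) * (zm * zp * (h + 3) * i2) + t * t + h * (h + 4)) * g = g * ((4 : R) * (zm * zp * (h + 3) * i2) + t * t + h * (h + 4)) →
      (zm * zp * (h + 3) * i2 + (1 / 4 : ℂ) • (t * t) + (1 / 4 : ℂ) • (h * (h + 4))) * g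
        = g * (zm * zp * (h + 3) * i2 + (1 / 4 : ℂ) • (t * t) + (1 / 4 : ℂ) • (h * (h + 4))) := by
    intro g hg
    rw [hCD, smul_mul_assoc, mul_smul_comm, hg]
  exact ⟨mk zp comm_zp, mk zm comm_zm, mk t comm_t, mk h comm_h⟩
end

section
/- Let R be a unital associative algebra over the rational numbers (or over ℂ) containing an invertible element z₋ and an element h satisfying h·z₋ − z₋·h = −2·z₋. Then the elements D = (1/2)·z₋·h and X = z₋⁻¹ form a Weyl pair: D·X − X·D = 1. (This verifies that the assignment x ↦ z₋⁻¹, d/dx ↦ (1/2)z₋h defines a homomorphism from the Weyl algebra to the corresponding localization.) -/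
/-- **A Weyl pair in the localization of `DR(sl(2))`.**
Let `R` be a unital associative `ℚ`-algebra containing an invertible element `z₋`
(a unit `u` with `z₋ = ↑u`) and an element `h` with `h * z₋ - z₋ * h = -2 z₋`.  Then
`D = (1/2) z₋ h` and `X = z₋⁻¹` form a Weyl pair: `D * X - X * D = 1`.  (This verifies
that `x ↦ z₋⁻¹`, `d/dx ↦ (1/2) z₋ h` defines a homomorphism from the Weyl algebra to
the corresponding localization.) -/
theorem weyl_pair_in_localized_DR_sl2
    {R : Type*} [Ring R] [Algebra ℚ R] (u : Rˣ) (h : R)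
    (hw : h * (u : R) - (u : R) * h = -2 * (u : R)) :
    ((1 / 2 : ℚ) • ((u : R) * h)) * ((u⁻¹ : Rˣ) : R)
      - ((u⁻¹ : Rˣ) : R) * ((1 / 2 : ℚ) • ((u : R) * h)) = 1 := by
  have key : (u : R) * h = h * (u : R) + 2 * (u : R) := by linear_combination (norm := noncomm_ring) -hw
  have h1 : (u : R) * h * ((u⁻¹ : Rˣ) : R) = h + 2 := by
    rw [key, add_mul, mul_assoc, mul_assoc, Units.mul_inv, mul_one, mul_one]
  have h2 : ((u⁻¹ : Rˣ) : R) * ((u : R) * h) = h := by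
    rw [← mul_assoc, Units.inv_mul, one_mul]
  rw [smul_mul_assoc, mul_smul_comm, h1, h2, ← smul_sub]
  have e1 : h + 2 - h = (2 : R) := by rw [add_sub_cancel_left]
  have e2 : (2 : R) = (2 : ℚ) • (1 : R) := by simp [Algebra.smul_def, map_ofNat]
  rw [e1, e2, smul_smul]
  norm_num
end
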